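/- arXiv:1404.7813 — 2 statements merged into one kernel-verified Lean document; each statement's English description precedes it below -/
import Mathlib

section
/- Let K be a regular cone, C₁ = {x ∈ K : c₁ᵀx ≥ c₁₀}, C₂ = {x ∈ K : c₂ᵀx ≥ c₂₀} with c₁₀, c₂₀ ∈ {0,±1}, C₁ ⊄ C₂, C₂ ⊄ C₁, both strictly feasible. If there exist β₁, β₂ ∈ ℝ such that c₁ − β₂c₂ ∈ K* and c₂ − β₁c₁ ∈ K*, then conv(C₁ ∪ C₂) is closed. -/
/-!
Let `Cᵢ = {x ∈ K | cᵢ₀ ≤ cᵢᵀx}`. The triples `(t, a, b)` with `t ∈ [0, 1]`, `a ∈ K`,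
`t c₁₀ ≤ c₁ᵀa`, `b ∈ K`, `(1 - t) c₂₀ ≤ c₂ᵀb` form a closed convex set, and because `K` is pointed,
`a` and `b` stay bounded when `a + b` does; so the image of this set under `(t, a, b) ↦ a + b` is
closed. It is convex and contains `C₁ ∪ C₂`, hence `conv (C₁ ∪ C₂)`. Conversely, for `0 < t < 1`
the point `a + b` is a convex combination of `a / t ∈ C₁` and `b / (1 - t) ∈ C₂`; for `t = 0` it
lies in `C₂ + rec C₁`, and the dual condition `c₂ - β₁ c₁ ∈ K*` shows that a recession direction
`u` of `C₁` along which `c₂ᵀ·` decreases has `c₁ᵀu > 0`, so that far enough along `u` one enters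
`C₁` and `b + a` lies on a segment between `C₂` and `C₁`. The case `t = 1` is symmetric.
-/

open Set

/-- Dot product on `Fin n → ℝ`. -/
def dot {n : ℕ} (c x : Fin n → ℝ) : ℝ := ∑ i, c i * x i

/-- Dual cone of a set `K ⊆ ℝⁿ`. -/
def dualCone {n : ℕ} (K : Set (Fin n → ℝ)) : Set (Fin n → ℝ) :=
  {y | ∀ x ∈ K, 0 ≤ dot y x}

open Metric Bornology

section Dot

variable {n : ℕ}

lemma dot_add_right (c x y : Fin n → ℝ) : dot c (x + y) = dot c x + dot c y :=
  dotProduct_add c x y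

lemma dot_smul_right (c : Fin n → ℝ) (t : ℝ) (x : Fin n → ℝ) :
    dot c (t • x) = t * dot c x :=
  dotProduct_smul t c x

lemma dot_zero_right (c : Fin n → ℝ) : dot c 0 = 0 :=
  dotProduct_zero c

lemma dot_sub_smul_left (a b : Fin n → ℝ) (t : ℝ) (x : Fin n → ℝ) :
    dot (a - t • b) x = dot a x - t * dot b x := by
  show (a - t • b) ⬝ᵥ x = a ⬝ᵥ x - t * (b ⬝ᵥ x)
  rw [sub_dotProduct, smul_dotProduct, smul_eq_mul]

@[fun_prop]
lemma continuous_dot (c : Fin n → ℝ) : Continuous fun x : Fin n → ℝ => dot c x :=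
  continuous_const.dotProduct continuous_id

end Dot

section ClosedImage

variable {X Y : Type*} [PseudoMetricSpace X] [ProperSpace X] [MetricSpace Y]

lemma IsClosed.image_of_isBounded_inter_preimage {S : Set X} (hS : IsClosed S) {f : X → Y}
    (hf : Continuous f) (hbdd : ∀ B, IsBounded B → IsBounded (S ∩ f ⁻¹' B)) :
    IsClosed (f '' S) := by
  refine closure_subset_iff_isClosed.mp fun z hz => ?_
  have hT : IsCompact (S ∩ f ⁻¹' closedBall z 1) :=
    isCompact_of_isClosed_isBounded (hS.inter (isClosed_closedBall.preimage hf))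
      (hbdd _ isBounded_closedBall)
  have hzT : z ∈ closure (f '' (S ∩ f ⁻¹' closedBall z 1)) := by
    refine closure_mono ?_ (isOpen_ball.inter_closure ⟨mem_ball_self one_pos, hz⟩)
    rintro _ ⟨hy, x, hxS, rfl⟩
    exact ⟨x, ⟨hxS, ball_subset_closedBall hy⟩, rfl⟩
  rw [(hT.image hf).isClosed.closure_eq] at hzT
  exact image_mono inter_subset_left hzT

end ClosedImage

section PointedCone

variable {E : Type*} [NormedAddCommGroup E] [NormedSpace ℝ E] [ProperSpace E]

lemma isBounded_summand_of_pointed_cone {K : Set E} (hKclosed : IsClosed K)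
    (hKcone : ∀ x ∈ K, ∀ t : ℝ, 0 ≤ t → t • x ∈ K) (hKpointed : ∀ x, x ∈ K → -x ∈ K → x = 0)
    {B : Set E} (hB : IsBounded B) : IsBounded {x ∈ K | ∃ y ∈ K, x + y ∈ B} := by
  -- the unit vectors of `K` keep a positive distance `r` from `-K`, so `‖x + y‖ ≥ r ‖x‖`
  have hdisj : Disjoint (K ∩ sphere 0 1) (-K) := by
    refine Set.disjoint_left.mpr fun x ⟨hxK, hx1⟩ hnx => ?_
    rw [hKpointed x hxK hnx, mem_sphere_zero_iff_norm, norm_zero] at hx1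
    exact zero_ne_one hx1
  obtain ⟨r, hr, hsep⟩ := exists_pos_forall_lt_edist
    ((isCompact_sphere 0 1).inter_left hKclosed) hKclosed.neg hdisj
  obtain ⟨R, hR⟩ := isBounded_iff_forall_norm_le.mp hB
  refine isBounded_iff_forall_norm_le.mpr ⟨(r : ℝ)⁻¹ * R, fun x ⟨hx, y, hy, hxy⟩ => ?_⟩
  rw [le_inv_mul_iff₀ (by exact_mod_cast hr)]
  refine le_trans ?_ (hR _ hxy)
  rcases eq_or_ne x 0 with rfl | hx0
  · simp
  have hxpos : 0 < ‖x‖ := norm_pos_iff.mpr hx0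
  have hlt := hsep (‖x‖⁻¹ • x) ⟨hKcone x hx _ (by positivity), by simp [norm_smul, hxpos.ne']⟩
    (-(‖x‖⁻¹ • y)) (by simpa using hKcone y hy _ (by positivity))
  rw [edist_nndist, ENNReal.coe_lt_coe, ← NNReal.coe_lt_coe, coe_nndist, dist_eq_norm,
    sub_neg_eq_add, ← smul_add, norm_smul, norm_inv, norm_norm, inv_mul_eq_div,
    lt_div_iff₀ hxpos] at hlt
  exact hlt.le

end PointedCone

section Slices

variable {n : ℕ} {K : Set (Fin n → ℝ)}

lemma add_mem_of_convex_cone (hKconv : Convex ℝ K)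
    (hKcone : ∀ x ∈ K, ∀ t : ℝ, 0 ≤ t → t • x ∈ K) {x y : Fin n → ℝ} (hx : x ∈ K) (hy : y ∈ K) :
    x + y ∈ K := by
  have h := hKcone _ (hKconv hx hy (by norm_num) (by norm_num) (add_halves (1 : ℝ))) 2 zero_le_two
  rwa [smul_add, smul_smul, smul_smul, mul_one_div_cancel two_ne_zero, one_smul, one_smul] at h

/-- `t • C` for `t > 0` and the recession cone of `C` for `t = 0`, where
`C = {x ∈ K | c₀ ≤ dot c x}`. -/
def scaledSlice (K : Set (Fin n → ℝ)) (c : Fin n → ℝ) (c₀ t : ℝ) : Set (Fin n → ℝ) :=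
  {x ∈ K | t * c₀ ≤ dot c x}

lemma mem_scaledSlice_one {c x : Fin n → ℝ} {c₀ : ℝ} :
    x ∈ scaledSlice K c c₀ 1 ↔ x ∈ {x ∈ K | c₀ ≤ dot c x} := by
  simp [scaledSlice]

lemma inv_smul_mem_of_mem_scaledSlice (hKcone : ∀ x ∈ K, ∀ t : ℝ, 0 ≤ t → t • x ∈ K)
    {c x : Fin n → ℝ} {c₀ t : ℝ} (ht : 0 < t) (hx : x ∈ scaledSlice K c c₀ t) :
    t⁻¹ • x ∈ {x ∈ K | c₀ ≤ dot c x} := by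
  refine ⟨hKcone x hx.1 _ (inv_nonneg.mpr ht.le), ?_⟩
  rw [dot_smul_right, le_inv_mul_iff₀ ht]
  exact hx.2

lemma zero_mem_scaledSlice_zero (hKcone : ∀ x ∈ K, ∀ t : ℝ, 0 ≤ t → t • x ∈ K)
    {x : Fin n → ℝ} (hx : x ∈ K) (c : Fin n → ℝ) (c₀ : ℝ) : 0 ∈ scaledSlice K c c₀ 0 :=
  ⟨by simpa using hKcone x hx 0 le_rfl, by rw [dot_zero_right, zero_mul]⟩

def liftedHull (K : Set (Fin n → ℝ)) (c₁ c₂ : Fin n → ℝ) (c₁₀ c₂₀ : ℝ) :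
    Set (ℝ × (Fin n → ℝ) × (Fin n → ℝ)) :=
  {p | p.1 ∈ Icc 0 1 ∧ p.2.1 ∈ scaledSlice K c₁ c₁₀ p.1 ∧ p.2.2 ∈ scaledSlice K c₂ c₂₀ (1 - p.1)}

variable {c₁ c₂ : Fin n → ℝ} {c₁₀ c₂₀ β₁ β₂ : ℝ}

lemma isClosed_liftedHull (hKclosed : IsClosed K) :
    IsClosed (liftedHull K c₁ c₂ c₁₀ c₂₀) := by
  have hfst : Continuous fun p : ℝ × (Fin n → ℝ) × (Fin n → ℝ) => p.2.1 := by fun_prop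
  have hsnd : Continuous fun p : ℝ × (Fin n → ℝ) × (Fin n → ℝ) => p.2.2 := by fun_prop
  refine (isClosed_Icc.preimage continuous_fst).inter (IsClosed.inter ?_ ?_)
  · exact (hKclosed.preimage hfst).inter
      (isClosed_le (by fun_prop) ((continuous_dot c₁).comp hfst))
  · exact (hKclosed.preimage hsnd).inter
      (isClosed_le (by fun_prop) ((continuous_dot c₂).comp hsnd))

lemma convex_liftedHull (hKconv : Convex ℝ K) : Convex ℝ (liftedHull K c₁ c₂ c₁₀ c₂₀) := by
  rintro ⟨t, a, b⟩ ⟨ht, ha, hb⟩ ⟨t', a', b'⟩ ⟨ht', ha', hb'⟩ μ ν hμ hν hμν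
  refine ⟨convex_Icc 0 1 ht ht' hμ hν hμν, ⟨hKconv ha.1 ha'.1 hμ hν hμν, ?_⟩,
    ⟨hKconv hb.1 hb'.1 hμ hν hμν, ?_⟩⟩
  · simp only [Prod.smul_mk, Prod.mk_add_mk, smul_eq_mul, dot_add_right, dot_smul_right]
    nlinarith [ha.2, ha'.2]
  · simp only [Prod.smul_mk, Prod.mk_add_mk, smul_eq_mul, dot_add_right, dot_smul_right]
    have h1 : 1 - (μ * t + ν * t') = μ * (1 - t) + ν * (1 - t') := by
      linear_combination -hμν
    rw [h1]
    nlinarith [hb.2, hb'.2]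

variable (hKconv : Convex ℝ K) (hKcone : ∀ x ∈ K, ∀ t : ℝ, 0 ≤ t → t • x ∈ K)
include hKconv hKcone

lemma add_mem_convexHull_union {c c' : Fin n → ℝ} {c₀ c₀' β : ℝ}
    (hdual : c' - β • c ∈ dualCone K) {v u : Fin n → ℝ}
    (hv : v ∈ {x ∈ K | c₀' ≤ dot c' x}) (hu : u ∈ scaledSlice K c c₀ 0) :
    v + u ∈ convexHull ℝ ({x ∈ K | c₀ ≤ dot c x} ∪ {x ∈ K | c₀' ≤ dot c' x}) := by
  have hcu : 0 ≤ dot c u := by simpa using hu.2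
  rcases le_or_gt 0 (dot c' u) with hc'u | hc'u
  · refine subset_convexHull ℝ _ (Or.inr ⟨add_mem_of_convex_cone hKconv hKcone hv.1 hu.1, ?_⟩)
    rw [dot_add_right]
    linarith [hv.2]
  have hcu_pos : 0 < dot c u := by
    refine hcu.lt_of_ne fun h => ?_
    have hβ := hdual u hu.1
    rw [dot_sub_smul_left, ← h] at hβ
    linarith
  -- `v + u` lies on the segment from `v ∈ C'` to a point `v + θ • u` of `C`
  set θ := max 1 ((c₀ - dot c v) / dot c u)
  have hθ : 1 ≤ θ := le_max_left _ _
  have hw : v + θ • u ∈ {x ∈ K | c₀ ≤ dot c x} := by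
    refine ⟨add_mem_of_convex_cone hKconv hKcone hv.1 (hKcone u hu.1 θ (by linarith)), ?_⟩
    rw [dot_add_right, dot_smul_right]
    linarith [(div_le_iff₀ hcu_pos).mp (le_max_right 1 ((c₀ - dot c v) / dot c u))]
  have h := (convex_convexHull ℝ ({x ∈ K | c₀ ≤ dot c x} ∪ {x ∈ K | c₀' ≤ dot c' x})).add_smul_mem
    (subset_convexHull ℝ _ (Or.inr hv)) (subset_convexHull ℝ _ (Or.inl hw))
    (⟨inv_nonneg.mpr (by linarith), inv_le_one_of_one_le₀ hθ⟩ : θ⁻¹ ∈ Icc (0 : ℝ) 1)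
  rwa [smul_smul, inv_mul_cancel₀ (by linarith), one_smul] at h

lemma image_liftedHull_subset (h₁ : c₁ - β₂ • c₂ ∈ dualCone K) (h₂ : c₂ - β₁ • c₁ ∈ dualCone K) :
    (fun p => p.2.1 + p.2.2) '' liftedHull K c₁ c₂ c₁₀ c₂₀ ⊆
      convexHull ℝ ({x ∈ K | c₁₀ ≤ dot c₁ x} ∪ {x ∈ K | c₂₀ ≤ dot c₂ x}) := by
  rintro _ ⟨⟨t, a, b⟩, ⟨ht, ha, hb⟩, rfl⟩
  dsimp only at ha hb ⊢
  rcases ht.1.eq_or_lt with rfl | ht0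
  · rw [sub_zero, mem_scaledSlice_one] at hb
    rw [add_comm]
    exact add_mem_convexHull_union hKconv hKcone h₂ hb ha
  rcases ht.2.eq_or_lt with rfl | ht1
  · rw [sub_self] at hb
    rw [mem_scaledSlice_one] at ha
    rw [union_comm]
    exact add_mem_convexHull_union hKconv hKcone h₁ ha hb
  have hs : 0 < 1 - t := sub_pos.mpr ht1
  have h := (convex_convexHull ℝ ({x ∈ K | c₁₀ ≤ dot c₁ x} ∪ {x ∈ K | c₂₀ ≤ dot c₂ x}))
    (subset_convexHull ℝ _ (Or.inl (inv_smul_mem_of_mem_scaledSlice hKcone ht0 ha)))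
    (subset_convexHull ℝ _ (Or.inr (inv_smul_mem_of_mem_scaledSlice hKcone hs hb)))
    ht0.le hs.le (add_sub_cancel t 1)
  rwa [smul_inv_smul₀ ht0.ne', smul_inv_smul₀ hs.ne'] at h

lemma convexHull_subset_image_liftedHull :
    convexHull ℝ ({x ∈ K | c₁₀ ≤ dot c₁ x} ∪ {x ∈ K | c₂₀ ≤ dot c₂ x}) ⊆
      (fun p => p.2.1 + p.2.2) '' liftedHull K c₁ c₂ c₁₀ c₂₀ := by
  refine convexHull_min ?_ ((convex_liftedHull hKconv).is_linear_image ?_)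
  · rintro x (hx | hx)
    · refine ⟨(1, x, 0), ⟨⟨zero_le_one, le_rfl⟩, mem_scaledSlice_one.mpr hx, ?_⟩, add_zero x⟩
      rw [sub_self]
      exact zero_mem_scaledSlice_zero hKcone hx.1 c₂ c₂₀
    · refine ⟨(0, 0, x), ⟨⟨le_rfl, zero_le_one⟩, zero_mem_scaledSlice_zero hKcone hx.1 c₁ c₁₀,
        ?_⟩, zero_add x⟩
      rw [sub_zero]
      exact mem_scaledSlice_one.mpr hx
  · exact ⟨fun p q => add_add_add_comm _ _ _ _, fun r p => (smul_add r _ _).symm⟩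

end Slices

lemma isClosed_image_liftedHull {n : ℕ} {K : Set (Fin n → ℝ)} (hKclosed : IsClosed K)
    (hKcone : ∀ x ∈ K, ∀ t : ℝ, 0 ≤ t → t • x ∈ K) (hKpointed : ∀ x, x ∈ K → -x ∈ K → x = 0)
    (c₁ c₂ : Fin n → ℝ) (c₁₀ c₂₀ : ℝ) :
    IsClosed ((fun p => p.2.1 + p.2.2) '' liftedHull K c₁ c₂ c₁₀ c₂₀) := by
  refine (isClosed_liftedHull hKclosed).image_of_isBounded_inter_preimage (by fun_prop)
    fun B hB => ?_
  have hS := isBounded_summand_of_pointed_cone hKclosed hKcone hKpointed hB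
  refine ((isBounded_Icc (0 : ℝ) 1).prod (hS.prod hS)).subset ?_
  rintro ⟨t, a, b⟩ ⟨⟨ht, ha, hb⟩, hab⟩
  exact ⟨ht, ⟨ha.1, b, hb.1, hab⟩, ⟨hb.1, a, ha.1, by rwa [add_comm]⟩⟩

theorem stmt_17_general {n : ℕ} (K : Set (Fin n → ℝ))
    (hKclosed : IsClosed K) (hKconv : Convex ℝ K)
    (hKcone : ∀ x ∈ K, ∀ t : ℝ, 0 ≤ t → t • x ∈ K)
    (hKpointed : ∀ x, x ∈ K → -x ∈ K → x = 0)
    (c₁ c₂ : Fin n → ℝ) (c₁₀ c₂₀ : ℝ)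
    (C₁ C₂ : Set (Fin n → ℝ))
    (hC₁ : C₁ = {x ∈ K | c₁₀ ≤ dot c₁ x})
    (hC₂ : C₂ = {x ∈ K | c₂₀ ≤ dot c₂ x})
    (hβ : ∃ β₁ β₂ : ℝ, c₁ - β₂ • c₂ ∈ dualCone K ∧ c₂ - β₁ • c₁ ∈ dualCone K) :
    IsClosed (convexHull ℝ (C₁ ∪ C₂)) := by
  subst hC₁ hC₂
  obtain ⟨β₁, β₂, h₁, h₂⟩ := hβ
  rw [(convexHull_subset_image_liftedHull hKconv hKcone).antisymm
    (image_liftedHull_subset hKconv hKcone h₁ h₂)]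
  exact isClosed_image_liftedHull hKclosed hKcone hKpointed c₁ c₂ c₁₀ c₂₀

theorem stmt_17 {n : ℕ} (K : Set (Fin n → ℝ))
    (hKclosed : IsClosed K) (hKconv : Convex ℝ K)
    (hKcone : ∀ x ∈ K, ∀ t : ℝ, 0 ≤ t → t • x ∈ K)
    (hKpointed : ∀ x, x ∈ K → -x ∈ K → x = 0)
    (hKfull : (interior K).Nonempty)
    (c₁ c₂ : Fin n → ℝ) (c₁₀ c₂₀ : ℝ)
    (hc₁₀ : c₁₀ = 0 ∨ c₁₀ = 1 ∨ c₁₀ = -1)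
    (hc₂₀ : c₂₀ = 0 ∨ c₂₀ = 1 ∨ c₂₀ = -1)
    (C₁ C₂ : Set (Fin n → ℝ))
    (hC₁ : C₁ = {x ∈ K | c₁₀ ≤ dot c₁ x})
    (hC₂ : C₂ = {x ∈ K | c₂₀ ≤ dot c₂ x})
    (h12 : ¬ C₁ ⊆ C₂) (h21 : ¬ C₂ ⊆ C₁)
    (hsf₁ : (C₁ ∩ interior K).Nonempty)
    (hsf₂ : (C₂ ∩ interior K).Nonempty)
    (hβ : ∃ β₁ β₂ : ℝ, c₁ - β₂ • c₂ ∈ dualCone K ∧ c₂ - β₁ • c₁ ∈ dualCone K) :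
    IsClosed (convexHull ℝ (C₁ ∪ C₂)) :=
  stmt_17_general K hKclosed hKconv hKcone hKpointed c₁ c₂ c₁₀ c₂₀ C₁ C₂ hC₁ hC₂ hβ
end

section
/- Let p ∈ (1, ∞), Kₚⁿ = {x ∈ ℝⁿ : ‖(x₁,…,x_{n−1})‖ₚ ≤ xₙ}, t₁, t₂ > 0, i ∈ {1,…,n−1}, and set C₁ = {x ∈ Kₚⁿ : t₁xᵢ ≥ 1}, C₂ = {x ∈ Kₚⁿ : −t₂xᵢ ≥ 1}. Then conv(C₁ ∪ C₂) = {x ∈ Kₚⁿ : ‖(t₁+t₂)x̃ − 2(t₂xᵢ + 1)ẽⁱ‖ₚ ≤ (t₁+t₂)xₙ}, where x̃ = (x₁,…,x_{n−1}) and ẽⁱ is the i-th standard unit vector of ℝ^{n−1}. -/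
open Set

noncomputable section

/-- First `n` coordinates of `x ∈ ℝ^{n+1}`. -/
def tl {n : ℕ} (x : Fin (n+1) → ℝ) : Fin n → ℝ := fun i => x i.castSucc

/-- The `p`-norm of a vector in `ℝ^m`. -/
def pnorm {m : ℕ} (p : ℝ) (w : Fin m → ℝ) : ℝ :=
  (∑ j, |w j| ^ p) ^ (1 / p)

/-- The `p`-order cone in `ℝ^{n+1}`. -/
def pCone (n : ℕ) (p : ℝ) : Set (Fin (n+1) → ℝ) :=
  {x | pnorm p (tl x) ≤ x (Fin.last n)}

/-!
For `⊆`: the right-hand side is `Kₚ ∩ Φ⁻¹(Kₚ)` for the affine map `Φ x = (t₁+t₂)x - 2(t₂xᵢ+1)eⁱ`,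
hence convex, and on `C₁ ∪ C₂` we have `(t₁xᵢ - 1)(t₂xᵢ + 1) ≥ 0`, which says exactly that
`|Φ(x)ᵢ| ≤ (t₁+t₂)|xᵢ|`; so `Φ x ∈ Kₚ` follows from `(t₁+t₂)x ∈ Kₚ`.

For `⊇`: if `-1/t₂ < xᵢ < 1/t₁`, then `Φ x / (t₁+t₂)` is `x` with `xᵢ` replaced by `-c`, where
`c = (2 + (t₂-t₁)xᵢ)/(t₁+t₂) > 0`. This point and its mirror image (with `c` instead) lie in `Kₚ`,
and `x` lies on the segment between them. Rescaling the two so that their `i`-th coordinates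
become `1/t₁` and `-1/t₂` puts them in `C₁` and `C₂`, and the value of `c` is exactly the one
for which `x` is still a convex combination of the rescaled points.
-/

section

variable {m n : ℕ} {p : ℝ}

lemma pnorm_smul (hp : 0 < p) {c : ℝ} (hc : 0 ≤ c) (w : Fin m → ℝ) :
    pnorm p (c • w) = c * pnorm p w := by
  have h : ∀ j, |(c • w) j| ^ p = c ^ p * |w j| ^ p := fun j => by
    rw [Pi.smul_apply, smul_eq_mul, abs_mul, abs_of_nonneg hc, Real.mul_rpow hc (abs_nonneg _)]
  unfold pnorm
  simp_rw [h, ← Finset.mul_sum]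
  rw [Real.mul_rpow (by positivity) (by positivity), ← Real.rpow_mul hc,
    mul_one_div_cancel hp.ne', Real.rpow_one]

lemma pnorm_mono (hp : 0 < p) {v w : Fin m → ℝ} (h : ∀ j, |v j| ≤ |w j|) :
    pnorm p v ≤ pnorm p w := by
  unfold pnorm
  refine Real.rpow_le_rpow (by positivity) (Finset.sum_le_sum fun j _ => ?_) (by positivity)
  exact Real.rpow_le_rpow (abs_nonneg _) (h j) hp.le

lemma convex_pCone (hp : 1 ≤ p) : Convex ℝ (pCone n p) := by
  intro x hx y hy a b ha hb _
  have hp0 : 0 < p := by linarith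
  calc pnorm p (tl (a • x + b • y)) = pnorm p (a • tl x + b • tl y) := rfl
    _ ≤ a * pnorm p (tl x) + b * pnorm p (tl y) := by
        rw [← pnorm_smul hp0 ha, ← pnorm_smul hp0 hb]
        exact Real.Lp_add_le Finset.univ _ _ hp
    _ ≤ a * x (Fin.last n) + b * y (Fin.last n) := by gcongr; exacts [hx, hy]
    _ = (a • x + b • y) (Fin.last n) := rfl

lemma smul_mem_pCone (hp : 0 < p) {c : ℝ} (hc : 0 ≤ c) {x : Fin (n+1) → ℝ}
    (hx : x ∈ pCone n p) : c • x ∈ pCone n p := by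
  change pnorm p (c • tl x) ≤ c * x (Fin.last n)
  rw [pnorm_smul hp hc]
  exact mul_le_mul_of_nonneg_left hx hc

lemma mem_pCone_of_abs_le (hp : 0 < p) {x y : Fin (n+1) → ℝ} (hx : x ∈ pCone n p)
    (h : ∀ j : Fin n, |y j.castSucc| ≤ |x j.castSucc|)
    (hlast : x (Fin.last n) ≤ y (Fin.last n)) : y ∈ pCone n p :=
  ((pnorm_mono hp h).trans hx).trans hlast

def splitMap (t₁ t₂ : ℝ) (i : Fin n) : (Fin (n+1) → ℝ) →ᵃ[ℝ] (Fin (n+1) → ℝ) :=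
  LinearMap.toAffineMap ((t₁ + t₂) • LinearMap.id -
      (2 * t₂) • (LinearMap.proj (R := ℝ) (φ := fun _ => ℝ) i.castSucc).smulRight
        (Pi.single i.castSucc 1)) -
    AffineMap.const ℝ (Fin (n+1) → ℝ) ((2 : ℝ) • (Pi.single i.castSucc 1 : Fin (n+1) → ℝ))

variable {t₁ t₂ : ℝ} {i : Fin n}

lemma splitMap_apply (x : Fin (n+1) → ℝ) : splitMap t₁ t₂ i x =
    (t₁ + t₂) • x - (2 * (t₂ * x i.castSucc + 1)) • Pi.single i.castSucc 1 := by
  ext j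
  simp only [splitMap, AffineMap.coe_sub, LinearMap.coe_toAffineMap, AffineMap.coe_const,
    Pi.sub_apply, LinearMap.sub_apply, LinearMap.smul_apply, LinearMap.id_coe, id_eq,
    LinearMap.coe_smulRight, LinearMap.coe_proj, Function.eval, Function.const_apply,
    Pi.smul_apply, smul_eq_mul]
  ring

lemma splitMap_mem_pCone_iff (x : Fin (n+1) → ℝ) : splitMap t₁ t₂ i x ∈ pCone n p ↔
    pnorm p (fun j => (t₁ + t₂) * tl x j -
      2 * (t₂ * x i.castSucc + 1) * (if j = i then 1 else 0)) ≤ (t₁ + t₂) * x (Fin.last n) := by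
  have htl : tl (splitMap t₁ t₂ i x) = fun j => (t₁ + t₂) * tl x j -
      2 * (t₂ * x i.castSucc + 1) * (if j = i then 1 else 0) := by
    ext j
    simp [tl, splitMap_apply, Pi.single_apply]
  change pnorm p (tl (splitMap t₁ t₂ i x)) ≤ splitMap t₁ t₂ i x (Fin.last n) ↔ _
  rw [htl]
  simp [splitMap_apply, Fin.castSucc_ne_last]

lemma update_castSucc_mem_pCone (hp : 0 < p) {x : Fin (n+1) → ℝ} (hx : x ∈ pCone n p)
    (k : Fin n) {a : ℝ} (ha : |a| ≤ |x k.castSucc|) : Function.update x k.castSucc a ∈ pCone n p := by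
  refine mem_pCone_of_abs_le hp hx (fun j => ?_) (by simp [(Fin.castSucc_ne_last _).symm])
  rcases eq_or_ne j k with rfl | hj
  · simpa using ha
  · simp [Fin.castSucc_inj, hj]

lemma splitMap_mem_pCone (hp : 0 < p) (hs : 0 ≤ t₁ + t₂) {x : Fin (n+1) → ℝ}
    (hx : x ∈ pCone n p) (h : 0 ≤ (t₁ * x i.castSucc - 1) * (t₂ * x i.castSucc + 1)) :
    splitMap t₁ t₂ i x ∈ pCone n p := by
  refine mem_pCone_of_abs_le hp (smul_mem_pCone hp hs hx) (fun j => ?_)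
    (by simp [splitMap_apply, (Fin.castSucc_ne_last _).symm])
  rcases eq_or_ne j i with rfl | hj
  · simp only [splitMap_apply, Pi.sub_apply, Pi.smul_apply, Pi.single_eq_same, smul_eq_mul]
    rw [← sq_le_sq]
    nlinarith
  · simp [splitMap_apply, Fin.castSucc_inj, hj]

lemma mem_convexHull_of_splitMap_mem (hp : 0 < p) (ht₁ : 0 < t₁) (ht₂ : 0 < t₂)
    {x : Fin (n+1) → ℝ} (hx : splitMap t₁ t₂ i x ∈ pCone n p)
    (h₁ : t₁ * x i.castSucc < 1) (h₂ : -(t₂ * x i.castSucc) < 1) :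
    x ∈ convexHull ℝ ({y ∈ pCone n p | 1 ≤ t₁ * y i.castSucc} ∪
      {y ∈ pCone n p | 1 ≤ -(t₂ * y i.castSucc)}) := by
  set A := (1 + t₂ * x i.castSucc) / (t₁ + t₂)
  set B := (1 - t₁ * x i.castSucc) / (t₁ + t₂)
  have hA : 0 < A := div_pos (by linarith) (by positivity)
  have hB : 0 < B := div_pos (by linarith) (by positivity)
  have hsum : t₁ * A + t₂ * B = 1 := by
    simp only [A, B]
    field_simp
    ring
  have hdiff : A - B = x i.castSucc := by
    simp only [A, B]
    field_simp
    ring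
  set c := A + B
  have hc : 0 < c := add_pos hA hB
  set yneg := Function.update x i.castSucc (-c)
  set ypos := Function.update x i.castSucc c
  have hyneg : yneg ∈ pCone n p := by
    have : yneg = (t₁ + t₂)⁻¹ • splitMap t₁ t₂ i x := by
      ext j
      rcases eq_or_ne j i.castSucc with rfl | hj
      · simp only [yneg, c, A, B, splitMap_apply, Function.update_self, Pi.smul_apply,
          Pi.sub_apply, Pi.single_eq_same, smul_eq_mul]
        field_simp
        ring
      · simp only [yneg, hj, splitMap_apply, Function.update_of_ne, Pi.smul_apply, Pi.sub_apply,
          smul_eq_mul, Pi.single_eq_of_ne, ne_eq, not_false_eq_true, mul_zero, sub_zero]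
        field_simp
    rw [this]
    exact smul_mem_pCone hp (by positivity) hx
  have hypos : ypos ∈ pCone n p := by
    simpa [yneg, ypos] using update_castSucc_mem_pCone hp hyneg i (a := c) (by simp [yneg])
  have hz₁ : (t₁ * c)⁻¹ • ypos ∈ {y ∈ pCone n p | 1 ≤ t₁ * y i.castSucc} :=
    ⟨smul_mem_pCone hp (by positivity) hypos, le_of_eq <| by
      simp only [ypos, Pi.smul_apply, Function.update_self, smul_eq_mul]
      field_simp⟩
  have hz₂ : (t₂ * c)⁻¹ • yneg ∈ {y ∈ pCone n p | 1 ≤ -(t₂ * y i.castSucc)} :=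
    ⟨smul_mem_pCone hp (by positivity) hyneg, le_of_eq <| by
      simp only [yneg, Pi.smul_apply, Function.update_self, smul_eq_mul, mul_neg, neg_neg]
      field_simp⟩
  have hcomb : (t₁ * A) • ((t₁ * c)⁻¹ • ypos) + (t₂ * B) • ((t₂ * c)⁻¹ • yneg) = x := by
    ext j
    rcases eq_or_ne j i.castSucc with rfl | hj
    · simp only [ypos, yneg, Pi.add_apply, Pi.smul_apply, Function.update_self, smul_eq_mul,
        mul_neg]
      field_simp
      linarith
    · simp only [ypos, yneg, c, Pi.add_apply, Pi.smul_apply, Function.update_of_ne hj,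
        smul_eq_mul]
      field_simp
  rw [← hcomb]
  exact convex_convexHull ℝ _ (subset_convexHull ℝ _ (mem_union_left _ hz₁))
    (subset_convexHull ℝ _ (mem_union_right _ hz₂)) (by positivity) (by positivity) hsum

end

theorem stmt_19 {n : ℕ} (p : ℝ) (hp : 1 < p)
    (t₁ t₂ : ℝ) (ht₁ : 0 < t₁) (ht₂ : 0 < t₂) (i : Fin n)
    (C₁ C₂ : Set (Fin (n+1) → ℝ))
    (hC₁ : C₁ = {x ∈ pCone n p | 1 ≤ t₁ * x i.castSucc})
    (hC₂ : C₂ = {x ∈ pCone n p | 1 ≤ -(t₂ * x i.castSucc)}) :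
    convexHull ℝ (C₁ ∪ C₂) =
      {x ∈ pCone n p |
        pnorm p (fun j => (t₁ + t₂) * tl x j -
            2 * (t₂ * x i.castSucc + 1) * (if j = i then 1 else 0)) ≤
          (t₁ + t₂) * x (Fin.last n)} := by
  subst hC₁ hC₂
  have hp₀ : 0 < p := by linarith
  simp_rw [← splitMap_mem_pCone_iff]
  apply Subset.antisymm
  · refine convexHull_min (union_subset ?_ ?_)
      ((convex_pCone hp.le).inter ((convex_pCone hp.le).affine_preimage _))
    · rintro x ⟨hx, hx₁⟩
      exact ⟨hx, splitMap_mem_pCone hp₀ (by positivity) hx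
        (mul_nonneg (by linarith) (by nlinarith))⟩
    · rintro x ⟨hx, hx₂⟩
      exact ⟨hx, splitMap_mem_pCone hp₀ (by positivity) hx
        (mul_nonneg_of_nonpos_of_nonpos (by nlinarith) (by linarith))⟩
  · rintro x ⟨hx, hΦ⟩
    by_cases h₁ : 1 ≤ t₁ * x i.castSucc
    · exact subset_convexHull ℝ _ (mem_union_left _ ⟨hx, h₁⟩)
    by_cases h₂ : 1 ≤ -(t₂ * x i.castSucc)
    · exact subset_convexHull ℝ _ (mem_union_right _ ⟨hx, h₂⟩)
    exact mem_convexHull_of_splitMap_mem hp₀ ht₁ ht₂ hΦ (not_le.1 h₁) (not_le.1 h₂)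
end
end
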